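/- Let S := {n + 1/n : n ∈ ℕ, n ≥ 1} ∪ ℕ ⊆ ℝ. Then S has uniform asymptotic upper density 2 with respect to its counting measure and Lebesgue measure, D̄(#|_S;|·|) = 2, while the difference set S − S accumulates at 0: every neighborhood of 0 contains a nonzero element of S − S. -/

import Mathlib

/-
Write `I n = [n, n + 1)`. If `ν (I n) ≤ k` for every integer `n`, then with `C = [-1, 1]` the
unit intervals meeting a set `V` are all contained in `C + V`, so `ν V ≤ k · |C + V|` and the
density is at most `k`. If `ν (I n) ≥ k` for all large `n`, then for any compact `C ⊆ [a, b]` the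
set `V` made of `N` consecutive such intervals has `ν V ≥ N k` and `|C + V| ≤ N + (b - a)`, so
letting `N → ∞` the density is at least `k`. The set `S` meets `I n` in at most the two points
`n` and `n + 1/n`, and in exactly these for `n ≥ 2`, so its density is `2`; the differences
`(n + 1/n) - n = 1/n` tend to `0`.
-/

open MeasureTheory Set Pointwise Filter ENNReal

/-- The uniform asymptotic upper density of a measure `ν` with respect to `μ`:
`inf` over nonempty compact sets `C` of `sup` over Borel sets `V` with compact
closure of `ν V / μ (C + V)`, where `C + V` is a Minkowski sum. -/
noncomputable def uaud {G : Type*} [AddCommGroup G] [TopologicalSpace G] [MeasurableSpace G]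
    (ν μ : Measure G) : ℝ≥0∞ :=
  ⨅ C ∈ {C : Set G | IsCompact C ∧ C.Nonempty},
    ⨆ V ∈ {V : Set G | MeasurableSet V ∧ IsCompact (closure V)},
      ν V / μ (C + V)

/-- The counting measure of the set `S`: the sum of Dirac measures at the points of `S`,
so that `countOn S V = #(S ∩ V)` for measurable `V`. -/
noncomputable def countOn {G : Type*} [MeasurableSpace G] (S : Set G) : Measure G :=
  Measure.sum (fun s : S => Measure.dirac (s : G))

open Topology

theorem countOn_apply {G : Type*} [MeasurableSpace G] (S : Set G) {V : Set G}
    (hV : MeasurableSet V) : countOn S V = (S ∩ V).encard := by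
  rw [countOn, Measure.sum_apply _ hV]
  simp_rw [Measure.dirac_apply' _ hV]
  rw [tsum_subtype S (V.indicator 1), indicator_indicator, ← tsum_subtype]
  exact ENNReal.tsum_set_one _

theorem measure_le_mul_volume_Icc_add {ν : Measure ℝ} {k : ℝ≥0∞}
    (h : ∀ n : ℤ, ν (Ico (n : ℝ) (n + 1)) ≤ k) (V : Set ℝ) :
    ν V ≤ k * volume (Icc (-1) 1 + V) := by
  set F := {n : ℤ | (V ∩ Ico (n : ℝ) (n + 1)).Nonempty}
  set W := ⋃ n ∈ F, Ico (n : ℝ) (n + 1)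
  have hW (μ : Measure ℝ) : μ W = ∑' n : F, μ (Ico (n : ℝ) (n + 1)) :=
    measure_biUnion F.to_countable ((pairwise_disjoint_Ico_intCast ℝ).set_pairwise F)
      fun _ _ => measurableSet_Ico
  have hVW : V ⊆ W := fun x hx =>
    have hx' : x ∈ Ico (⌊x⌋ : ℝ) (⌊x⌋ + 1) := ⟨Int.floor_le x, Int.lt_floor_add_one x⟩
    mem_biUnion (x := ⌊x⌋) ⟨x, hx, hx'⟩ hx'
  have hWV : W ⊆ Icc (-1) 1 + V := by
    simp only [W, iUnion_subset_iff]
    rintro n ⟨x, hxV, hxn⟩ y hyn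
    exact ⟨y - x, ⟨by linarith [hxn.2, hyn.1], by linarith [hxn.1, hyn.2]⟩, x, hxV,
      sub_add_cancel y x⟩
  calc ν V ≤ ν W := measure_mono hVW
    _ = ∑' n : F, ν (Ico (n : ℝ) (n + 1)) := hW ν
    _ ≤ ∑' n : F, k * volume (Ico (n : ℝ) (n + 1)) :=
      ENNReal.tsum_le_tsum fun n => by simpa [Real.volume_Ico] using h n
    _ = k * volume W := by rw [hW, ENNReal.tsum_mul_left]
    _ ≤ k * volume (Icc (-1) 1 + V) := by gcongr

theorem uaud_volume_le_of_measure_Ico_le {ν : Measure ℝ} {k : ℝ≥0∞}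
    (h : ∀ n : ℤ, ν (Ico (n : ℝ) (n + 1)) ≤ k) : uaud ν volume ≤ k :=
  iInf₂_le_of_le (Icc (-1) 1) ⟨isCompact_Icc, -1, by norm_num⟩ <|
    iSup₂_le fun V _ => ENNReal.div_le_of_le_mul (measure_le_mul_volume_Icc_add h V)

theorem biUnion_Ico_intCast_subset_Icc (n₀ : ℤ) (N : ℕ) :
    ⋃ n ∈ Finset.Ico n₀ (n₀ + N), Ico (n : ℝ) (n + 1) ⊆ Icc (n₀ : ℝ) (n₀ + N) := by
  simp only [iUnion_subset_iff, Finset.mem_Ico]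
  intro n hn x hx
  have h1 : (n₀ : ℝ) ≤ n := by exact_mod_cast hn.1
  have h2 : (n : ℝ) + 1 ≤ n₀ + N := by exact_mod_cast hn.2
  exact ⟨by linarith [hx.1], by linarith [hx.2]⟩

theorem natCast_mul_le_measure_biUnion_Ico {ν : Measure ℝ} {k : ℝ≥0∞} (n₀ : ℤ) (N : ℕ)
    (h : ∀ n : ℤ, n₀ ≤ n → k ≤ ν (Ico (n : ℝ) (n + 1))) :
    N * k ≤ ν (⋃ n ∈ Finset.Ico n₀ (n₀ + N), Ico (n : ℝ) (n + 1)) := by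
  rw [measure_biUnion_finset ((pairwise_disjoint_Ico_intCast ℝ).set_pairwise _)
    fun _ _ => measurableSet_Ico]
  simpa using Finset.card_nsmul_le_sum (Finset.Ico n₀ (n₀ + N)) _ k
    fun n hn => h n (Finset.mem_Ico.1 hn).1

theorem le_uaud_volume_of_le_measure_Ico {ν : Measure ℝ} {k : ℝ≥0∞} (n₀ : ℤ)
    (h : ∀ n : ℤ, n₀ ≤ n → k ≤ ν (Ico (n : ℝ) (n + 1))) : k ≤ uaud ν volume := by
  refine le_iInf₂ fun C ⟨hC, c, hc⟩ => ?_
  obtain ⟨a, ha⟩ := hC.isBounded.bddBelow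
  obtain ⟨b, hb⟩ := hC.isBounded.bddAbove
  have hab : 0 ≤ b - a := by linarith [ha hc, hb hc]
  set V : ℕ → Set ℝ := fun N => ⋃ n ∈ Finset.Ico n₀ (n₀ + N), Ico (n : ℝ) (n + 1)
  have hV_mem (N : ℕ) : V N ∈ {V : Set ℝ | MeasurableSet V ∧ IsCompact (closure V)} :=
    ⟨Finset.measurableSet_biUnion _ fun _ _ => measurableSet_Ico,
      ((Metric.isBounded_Icc _ _).subset (biUnion_Ico_intCast_subset_Icc n₀ N)).isCompact_closure⟩
  have hvol (N : ℕ) : volume (C + V N) ≤ ENNReal.ofReal (N + (b - a)) :=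
    calc volume (C + V N) ≤ volume (Icc (a + n₀) (b + (n₀ + N))) :=
          measure_mono <| (add_subset_add (show C ⊆ Icc a b from fun x hx => ⟨ha hx, hb hx⟩)
            (biUnion_Ico_intCast_subset_Icc n₀ N)).trans (Icc_add_Icc_subset _ _ _ _)
      _ = ENNReal.ofReal (N + (b - a)) := by rw [Real.volume_Icc]; ring_nf
  have hlim : Tendsto (fun N : ℕ => k * ENNReal.ofReal (N / (N + (b - a)))) atTop (𝓝 k) := by
    simpa using ENNReal.Tendsto.const_mul
      (ENNReal.tendsto_ofReal (tendsto_natCast_div_add_atTop (b - a))) (.inl (by simp))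
  refine le_of_tendsto hlim (eventually_atTop.2 ⟨1, fun N hN => ?_⟩)
  have hpos : (0 : ℝ) < N + (b - a) := by
    have : (1 : ℝ) ≤ N := by exact_mod_cast hN
    linarith
  calc k * ENNReal.ofReal (N / (N + (b - a)))
      = N * k / ENNReal.ofReal (N + (b - a)) := by
        rw [ENNReal.ofReal_div_of_pos hpos, ENNReal.ofReal_natCast, ← mul_div_assoc, mul_comm k]
    _ ≤ ν (V N) / volume (C + V N) :=
      ENNReal.div_le_div (natCast_mul_le_measure_biUnion_Ico n₀ N h) (hvol N)
    _ ≤ ⨆ V ∈ {V : Set ℝ | MeasurableSet V ∧ IsCompact (closure V)}, ν V / volume (C + V) :=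
      le_iSup₂ (f := fun V _ => ν V / volume (C + V)) (V N) (hV_mem N)

theorem Int.floor_natCast_add_one_div {m : ℕ} (hm : 2 ≤ m) : ⌊(m : ℝ) + 1 / m⌋ = m := by
  have hm' : (2 : ℝ) ≤ m := by exact_mod_cast hm
  have hinv : 1 / (m : ℝ) < 1 := (div_lt_one (by linarith)).2 (by linarith)
  rw [Int.floor_eq_iff]
  push_cast
  exact ⟨le_add_of_nonneg_right (by positivity), by linarith⟩

def natAddInvUnionNat : Set ℝ :=
  {x : ℝ | ∃ n : ℕ, 1 ≤ n ∧ x = (n : ℝ) + 1 / (n : ℝ)} ∪ {x : ℝ | ∃ n : ℕ, x = (n : ℝ)}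

namespace natAddInvUnionNat

theorem eq_floor_or_eq_floor_add_one_div {x : ℝ} (hx : x ∈ natAddInvUnionNat) :
    x = ⌊x⌋ ∨ x = ⌊x⌋ + 1 / (⌊x⌋ : ℝ) := by
  rcases hx with ⟨m, hm, rfl⟩ | ⟨m, rfl⟩
  · obtain rfl | hm := hm.eq_or_lt
    · left; norm_num
    · right; rw [Int.floor_natCast_add_one_div hm]; push_cast; rfl
  · left; simp

theorem inter_Ico_subset (n : ℤ) :
    natAddInvUnionNat ∩ Ico (n : ℝ) (n + 1) ⊆ ({(n : ℝ), (n : ℝ) + 1 / (n : ℝ)} : Set ℝ) := by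
  rintro x ⟨hx, hxn⟩
  simpa [Int.floor_eq_iff.2 hxn] using eq_floor_or_eq_floor_add_one_div hx

theorem pair_subset_inter_Ico {n : ℕ} (hn : 2 ≤ n) :
    ({(n : ℝ), (n : ℝ) + 1 / (n : ℝ)} : Set ℝ) ⊆ natAddInvUnionNat ∩ Ico (n : ℝ) (n + 1) := by
  have hn' : (2 : ℝ) ≤ n := by exact_mod_cast hn
  have hinv : 1 / (n : ℝ) < 1 := (div_lt_one (by linarith)).2 (by linarith)
  rintro x (rfl | rfl)
  · exact ⟨.inr ⟨n, rfl⟩, le_rfl, by linarith⟩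
  · exact ⟨.inl ⟨n, by omega, rfl⟩, by simp, by linarith⟩

theorem countOn_Ico_le (n : ℤ) : countOn natAddInvUnionNat (Ico (n : ℝ) (n + 1)) ≤ 2 := by
  rw [countOn_apply _ measurableSet_Ico, ← ENat.toENNReal_ofNat, ENat.toENNReal_le]
  exact (encard_le_encard (inter_Ico_subset n)).trans <|
    (encard_insert_le _ _).trans (by rw [encard_singleton]; rfl)

theorem two_le_countOn_Ico {n : ℤ} (hn : 2 ≤ n) :
    2 ≤ countOn natAddInvUnionNat (Ico (n : ℝ) (n + 1)) := by
  lift n to ℕ using by omega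
  have hne : (n : ℝ) ≠ n + 1 / n := by
    have : (0 : ℝ) < 1 / n := one_div_pos.2 (by exact_mod_cast (by omega : 0 < n))
    linarith
  rw [countOn_apply _ measurableSet_Ico, ← ENat.toENNReal_ofNat, ENat.toENNReal_le,
    ← encard_pair hne]
  exact encard_le_encard (by exact_mod_cast pair_subset_inter_Ico (by omega))

theorem uaud_countOn : uaud (countOn natAddInvUnionNat) volume = 2 :=
  le_antisymm (uaud_volume_le_of_measure_Ico_le countOn_Ico_le)
    (le_uaud_volume_of_le_measure_Ico 2 fun _ => two_le_countOn_Ico)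

theorem one_div_mem_sub {m : ℕ} (hm : 1 ≤ m) :
    1 / (m : ℝ) ∈ natAddInvUnionNat - natAddInvUnionNat :=
  ⟨m + 1 / m, .inl ⟨m, hm, rfl⟩, m, .inr ⟨m, rfl⟩, add_sub_cancel_left _ _⟩

end natAddInvUnionNat

theorem density_two_diff_accumulates :
    uaud (countOn ({x : ℝ | ∃ n : ℕ, 1 ≤ n ∧ x = (n : ℝ) + 1 / (n : ℝ)} ∪
      {x : ℝ | ∃ n : ℕ, x = (n : ℝ)})) volume = 2 ∧
    ∀ U ∈ nhds (0 : ℝ),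
      ∃ t ∈ ({x : ℝ | ∃ n : ℕ, 1 ≤ n ∧ x = (n : ℝ) + 1 / (n : ℝ)} ∪
          {x : ℝ | ∃ n : ℕ, x = (n : ℝ)}) -
        ({x : ℝ | ∃ n : ℕ, 1 ≤ n ∧ x = (n : ℝ) + 1 / (n : ℝ)} ∪
          {x : ℝ | ∃ n : ℕ, x = (n : ℝ)}),
        t ≠ 0 ∧ t ∈ U := by
  refine ⟨natAddInvUnionNat.uaud_countOn, fun U hU => ?_⟩
  obtain ⟨n, hn⟩ := (tendsto_one_div_add_atTop_nhds_zero_nat.eventually hU).exists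
  have hmem := natAddInvUnionNat.one_div_mem_sub (Nat.le_add_left 1 n)
  push_cast at hmem
  exact ⟨_, hmem, by positivity, hn⟩
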